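/- Let s_n denote the number of independent dominating sets of the ortho-chain square cactus S_n. Then for every n ≥ 1, s_n = 2ⁿ. -/

import Mathlib

/-- `S` is an independent dominating set of `G`: pairwise non-adjacent, and every
vertex outside `S` has a neighbour in `S`. -/
def IsIndepDomSet {V : Type*} (G : SimpleGraph V) (S : Finset V) : Prop :=
  (∀ v ∈ S, ∀ w ∈ S, ¬ G.Adj v w) ∧ ∀ v, v ∉ S → ∃ w ∈ S, G.Adj v w

/-- The ortho-chain square cactus `S n`: `Sum.inl i` is the cut vertex `x i`
(`0 ≤ i ≤ n`), `Sum.inr (Sum.inl k)` is `y (k+1)` and `Sum.inr (Sum.inr k)` is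
`z (k+1)` (`0 ≤ k ≤ n-1`); the `i`-th square (`1 ≤ i ≤ n`) is the four-cycle
`x (i-1) – x i – y i – z i – x (i-1)`. -/
def orthoSq (n : ℕ) : SimpleGraph (Fin (n + 1) ⊕ (Fin n ⊕ Fin n)) :=
  SimpleGraph.fromRel fun p q =>
    match p, q with
    | Sum.inl i, Sum.inl j => (i : ℕ) + 1 = (j : ℕ)
    | Sum.inl i, Sum.inr (Sum.inl k) => (i : ℕ) = (k : ℕ) + 1
    | Sum.inl i, Sum.inr (Sum.inr k) => (i : ℕ) = (k : ℕ)
    | Sum.inr (Sum.inl k), Sum.inr (Sum.inr k') => k = k'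
    | _, _ => False

/-- The number of independent dominating sets of the ortho-chain square cactus `S n`. -/
noncomputable def numIDSOrthoSq (n : ℕ) : ℕ :=
  Nat.card {S : Finset (Fin (n + 1) ⊕ (Fin n ⊕ Fin n)) // IsIndepDomSet (orthoSq n) S}

/-! In every square exactly one of `y k`, `z k` lies in an independent dominating set `S`: they
are adjacent, and if neither did, their other neighbours `x (k-1)` and `x k` would both have to,
though they are adjacent. These choices determine `S`, since a cut vertex lies in `S` exactly when
neither the `z` of the square to its right nor the `y` of the square to its left does; conversely
every choice yields an independent dominating set. So independent dominating sets correspond to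
subsets of the `n` squares. -/

theorem IsIndepDomSet.mem_iff {V : Type*} {G : SimpleGraph V} {S : Finset V}
    (hS : IsIndepDomSet G S) (v : V) : v ∈ S ↔ ∀ w, G.Adj v w → w ∉ S := by
  refine ⟨fun hv w hvw hw => hS.1 v hv w hw hvw, fun h => ?_⟩
  by_contra hv
  obtain ⟨w, hw, hvw⟩ := hS.2 v hv
  exact h w hvw hw

theorem isIndepDomSet_iff {V : Type*} {G : SimpleGraph V} {S : Finset V} :
    IsIndepDomSet G S ↔ ∀ v, v ∈ S ↔ ∀ w, G.Adj v w → w ∉ S := by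
  refine ⟨IsIndepDomSet.mem_iff, fun h => ⟨fun v hv w hw hvw => (h v).1 hv w hvw hw, ?_⟩⟩
  intro v hv
  simpa [h v, and_comm] using hv

namespace OrthoSq

variable {n : ℕ}

abbrev Vertex (n : ℕ) := Fin (n + 1) ⊕ (Fin n ⊕ Fin n)

theorem adj_inr_inl (k : Fin n) (w : Vertex n) :
    (orthoSq n).Adj (.inr (.inl k)) w ↔ w = .inl k.succ ∨ w = .inr (.inr k) := by
  rcases w with j | l | l <;> simp [orthoSq, Fin.ext_iff, eq_comm]

theorem adj_inr_inr (k : Fin n) (w : Vertex n) :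
    (orthoSq n).Adj (.inr (.inr k)) w ↔ w = .inl k.castSucc ∨ w = .inr (.inl k) := by
  rcases w with j | l | l <;> simp [orthoSq, Fin.ext_iff, eq_comm]

theorem adj_inl (i : Fin (n + 1)) (w : Vertex n) :
    (orthoSq n).Adj (.inl i) w ↔ ∃ k : Fin n,
      (k.castSucc = i ∧ (w = .inl k.succ ∨ w = .inr (.inr k))) ∨
      (k.succ = i ∧ (w = .inl k.castSucc ∨ w = .inr (.inl k))) := by
  rcases w with j | l | l
  · rw [orthoSq, SimpleGraph.fromRel_adj]
    simp only [Sum.inl.injEq, reduceCtorEq, or_false, ne_eq, Fin.ext_iff, Fin.val_castSucc,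
      Fin.val_succ]
    constructor
    · rintro ⟨-, h | h⟩
      · exact ⟨⟨i, by omega⟩, Or.inl ⟨rfl, h.symm⟩⟩
      · exact ⟨⟨j, by omega⟩, Or.inr ⟨h, rfl⟩⟩
    · rintro ⟨k, ⟨hi, hj⟩ | ⟨hi, hj⟩⟩ <;> omega
  · rw [SimpleGraph.adj_comm, adj_inr_inl]
    simp [eq_comm]
  · rw [SimpleGraph.adj_comm, adj_inr_inr]
    simp [eq_comm]

variable {P : Vertex n → Prop}

theorem forall_adj_inl (i : Fin (n + 1)) :
    (∀ w, (orthoSq n).Adj (.inl i) w → P w) ↔ ∀ k : Fin n,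
      (k.castSucc = i → P (.inl k.succ) ∧ P (.inr (.inr k))) ∧
      (k.succ = i → P (.inl k.castSucc) ∧ P (.inr (.inl k))) := by
  simp only [adj_inl, forall_exists_index]
  rw [forall_comm]
  simp only [or_imp, and_imp, forall_and, forall_eq_apply_imp_iff]

theorem forall_adj_inr_inl (k : Fin n) :
    (∀ w, (orthoSq n).Adj (.inr (.inl k)) w → P w) ↔
      P (.inl k.succ) ∧ P (.inr (.inr k)) := by
  simp [adj_inr_inl]

theorem forall_adj_inr_inr (k : Fin n) :
    (∀ w, (orthoSq n).Adj (.inr (.inr k)) w → P w) ↔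
      P (.inl k.castSucc) ∧ P (.inr (.inl k)) := by
  simp [adj_inr_inr]

def yPattern (S : Finset (Vertex n)) : Finset (Fin n) :=
  {k | .inr (.inl k) ∈ S}

def MemOfPattern (T : Finset (Fin n)) : Vertex n → Prop
  | .inl i => ∀ k : Fin n, (k.castSucc = i → k ∈ T) ∧ (k.succ = i → k ∉ T)
  | .inr (.inl k) => k ∈ T
  | .inr (.inr k) => k ∉ T

open Classical in
noncomputable def ofPattern (T : Finset (Fin n)) : Finset (Vertex n) :=
  Finset.univ.filter (MemOfPattern T)

@[simp] theorem mem_ofPattern_inl (T : Finset (Fin n)) (i : Fin (n + 1)) :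
    .inl i ∈ ofPattern T ↔
      ∀ k : Fin n, (k.castSucc = i → k ∈ T) ∧ (k.succ = i → k ∉ T) := by
  simp [ofPattern, MemOfPattern]

@[simp] theorem mem_ofPattern_inr_inl (T : Finset (Fin n)) (k : Fin n) :
    .inr (.inl k) ∈ ofPattern T ↔ k ∈ T := by
  simp [ofPattern, MemOfPattern]

@[simp] theorem mem_ofPattern_inr_inr (T : Finset (Fin n)) (k : Fin n) :
    .inr (.inr k) ∈ ofPattern T ↔ k ∉ T := by
  simp [ofPattern, MemOfPattern]

theorem inl_succ_notMem_ofPattern {T : Finset (Fin n)} {k : Fin n} (hk : k ∈ T) :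
    .inl k.succ ∉ ofPattern T :=
  fun h => ((mem_ofPattern_inl T _).1 h k).2 rfl hk

theorem inl_castSucc_notMem_ofPattern {T : Finset (Fin n)} {k : Fin n} (hk : k ∉ T) :
    .inl k.castSucc ∉ ofPattern T :=
  fun h => hk (((mem_ofPattern_inl T _).1 h k).1 rfl)

theorem isIndepDomSet_ofPattern (T : Finset (Fin n)) :
    IsIndepDomSet (orthoSq n) (ofPattern T) := by
  rw [isIndepDomSet_iff]
  rintro (i | k | k)
  · rw [forall_adj_inl, mem_ofPattern_inl]
    refine forall_congr' fun k => ?_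
    have hsucc : k ∈ T → .inl k.succ ∉ ofPattern T := inl_succ_notMem_ofPattern
    have hcast : k ∉ T → .inl k.castSucc ∉ ofPattern T := inl_castSucc_notMem_ofPattern
    simp only [mem_ofPattern_inr_inl, mem_ofPattern_inr_inr, not_not]
    tauto
  · have hsucc : k ∈ T → .inl k.succ ∉ ofPattern T := inl_succ_notMem_ofPattern
    rw [forall_adj_inr_inl]
    simp only [mem_ofPattern_inr_inl, mem_ofPattern_inr_inr, not_not]
    tauto
  · have hcast : k ∉ T → .inl k.castSucc ∉ ofPattern T := inl_castSucc_notMem_ofPattern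
    rw [forall_adj_inr_inr]
    simp only [mem_ofPattern_inr_inl, mem_ofPattern_inr_inr]
    tauto

variable {S : Finset (Vertex n)}

theorem inr_inr_mem_iff (hS : IsIndepDomSet (orthoSq n) S) (k : Fin n) :
    .inr (.inr k) ∈ S ↔ .inr (.inl k) ∉ S := by
  have hz := hS.mem_iff (.inr (.inr k))
  have hy := hS.mem_iff (.inr (.inl k))
  rw [forall_adj_inr_inr] at hz
  rw [forall_adj_inr_inl] at hy
  have hx : .inl k.castSucc ∈ S → .inl k.succ ∉ S := fun hl hr =>
    hS.1 _ hl _ hr ((adj_inl k.castSucc (.inl k.succ)).2 ⟨k, .inl ⟨rfl, .inl rfl⟩⟩)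
  tauto

theorem inl_mem_iff (hS : IsIndepDomSet (orthoSq n) S) (i : Fin (n + 1)) :
    .inl i ∈ S ↔ ∀ k : Fin n,
      (k.castSucc = i → .inr (.inl k) ∈ S) ∧ (k.succ = i → .inr (.inl k) ∉ S) := by
  rw [hS.mem_iff, forall_adj_inl]
  refine forall_congr' fun k => ?_
  have hy := hS.mem_iff (.inr (.inl k))
  rw [forall_adj_inr_inl] at hy
  have hzx : .inr (.inr k) ∈ S → .inl k.castSucc ∉ S := fun hz hx =>
    hS.1 _ hz _ hx ((adj_inr_inr k (.inl k.castSucc)).2 (.inl rfl))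
  have hz := inr_inr_mem_iff hS k
  tauto

theorem eq_ofPattern_yPattern (hS : IsIndepDomSet (orthoSq n) S) :
    S = ofPattern (yPattern S) := by
  ext (i | k | k) <;> simp [inl_mem_iff hS, inr_inr_mem_iff hS, yPattern]

theorem yPattern_ofPattern (T : Finset (Fin n)) : yPattern (ofPattern T) = T := by
  ext k; simp [yPattern]

noncomputable def indepDomSetEquiv (n : ℕ) :
    {S // IsIndepDomSet (orthoSq n) S} ≃ Finset (Fin n) where
  toFun S := yPattern S.1
  invFun T := ⟨ofPattern T, isIndepDomSet_ofPattern T⟩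
  left_inv S := Subtype.ext (eq_ofPattern_yPattern S.2).symm
  right_inv := yPattern_ofPattern

end OrthoSq

theorem numIDSOrthoSq_eq_pow_general (n : ℕ) :
    numIDSOrthoSq n = 2 ^ n := by
  rw [numIDSOrthoSq, Nat.card_congr (OrthoSq.indepDomSetEquiv n)]
  simp [Nat.card_eq_fintype_card]

/-- For every `n ≥ 1`, the number of independent dominating sets of the ortho-chain
square cactus `S n` equals `2 ^ n`. -/
theorem numIDSOrthoSq_eq_pow (n : ℕ) (hn : 1 ≤ n) :
    numIDSOrthoSq n = 2 ^ n :=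
  numIDSOrthoSq_eq_pow_general n
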